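/- arXiv:2110.09838 — 3 statements merged into one kernel-verified Lean document; each statement's English description precedes it below -/
import Mathlib

section
/- There exists a continuous function θ on X₃ = {(y,z,z') : z,z' ∈ X⁺ with z₀ = z'₀, y ∈ X⁻_z} such that for all such z, z' and every continuous function φ on X⁻_z, ∫ φ(y) ν⁻_{z'}(dy) = ∫ φ(y) e^{θ(y,z,z')} ν⁻_z(dy); moreover there is a constant c > 0 with |θ(y,z,z')| ≤ c α^{ω(z,z')}. In fact one can take θ(y,z,z') = Σ_{k=1}^∞ (ψ(T^{-k}(y·z)) − ψ(T^{-k}(y·z'))). -/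
open MeasureTheory

variable {A : Type*}

/-- The one-sided subshift of finite type. -/
def XplusSet (M : A → A → Bool) : Set (ℕ → A) := {z | ∀ n : ℕ, M (z n) (z (n + 1)) = true}

/-- The one-sided shift map. -/
def shiftN : (ℕ → A) → ℕ → A := fun z n => z (n + 1)

/-- The inverse of the two-sided shift map. -/
def shiftZinv : (ℤ → A) → ℤ → A := fun x n => x (n - 1)

/-- One-sided Birkhoff sums. -/
noncomputable def birkhoffN (ψ : (ℕ → A) → ℝ) (n : ℕ) (z : ℕ → A) : ℝ :=
  ∑ k ∈ Finset.range n, ψ (shiftN^[k] z)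

/-- The projection of a two-sided sequence on its future coordinates. -/
def futurePart (x : ℤ → A) : ℕ → A := fun n => x n

/-- The concatenation `y·z ∈ A^ℤ` of a past `y` (with `y k = x_{-(k+1)}`) and a future `z`. -/
def concat (y z : ℕ → A) : ℤ → A :=
  fun n => if 0 ≤ n then z n.toNat else y (-(n + 1)).toNat

/-- `y ∈ X⁻_z` : the past `y` is compatible with the future `z`. -/
def pastCompat (M : A → A → Bool) (y z : ℕ → A) : Prop :=
  M (y 0) (z 0) = true ∧ ∀ k : ℕ, M (y (k + 1)) (y k) = true

/-- One-sided Hölder continuity with constant `C` and exponent `α` on `S`. -/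
def HolderWithN (S : Set (ℕ → A)) (C α : ℝ) (f : (ℕ → A) → ℝ) : Prop :=
  ∀ z ∈ S, ∀ z' ∈ S, ∀ k : ℕ, (∀ j : ℕ, j < k → z j = z' j) → |f z - f z'| ≤ C * α ^ k

/-- The one-sided word `a·z` obtained by prepending the word `a = (y_{-k},...,y_{-1})`
(encoded with `a i = x_{-(i+1)}`) to the future `z`. -/
def wordConcat {k : ℕ} (a : Fin k → A) (z : ℕ → A) : ℕ → A :=
  fun n => if h : n < k then a ⟨k - 1 - n, by omega⟩ else z (n - k)

/-- Compatibility of the word `a` with the future `z`. -/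
def wordCompat (M : A → A → Bool) {k : ℕ} (a : Fin k → A) (z : ℕ → A) : Prop :=
  (∀ h : 0 < k, M (a ⟨0, h⟩) (z 0) = true) ∧
    ∀ i : ℕ, ∀ h : i + 1 < k, M (a ⟨i + 1, h⟩) (a ⟨i, by omega⟩) = true

/-- The cylinder `{y : y_{-k} = a_{-k}, ..., y_{-1} = a_{-1}}` in the space of pasts. -/
def pastCyl {k : ℕ} (a : Fin k → A) : Set (ℕ → A) := {y | ∀ i : Fin k, y i = a i}

/-- The family `z ↦ ν⁻_z` of conditional measures on the pasts, determined on cylinders by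
`ν⁻_z(C_{a,z}) = exp(-S_k ψ(a·z))` for compatible words `a`, and `0` otherwise. -/
def IsCondGibbs [MeasurableSpace A] (M : A → A → Bool) (ψ : (ℕ → A) → ℝ)
    (νm : (ℕ → A) → Measure (ℕ → A)) : Prop :=
  ∀ z ∈ XplusSet M, ∀ (k : ℕ) (a : Fin k → A),
    (wordCompat M a z →
      νm z (pastCyl a) = ENNReal.ofReal (Real.exp (-birkhoffN ψ k (wordConcat a z)))) ∧
    (¬ wordCompat M a z → νm z (pastCyl a) = 0)

/-- `a ↦ a·z` : prepending a letter to a one-sided sequence. -/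
def consN (a : A) (z : ℕ → A) : ℕ → A := fun n => if n = 0 then a else z (n - 1)

/-- The Ruelle transfer operator `L_ψ φ(z) = ∑_{Ty=z} e^{-ψ(y)} φ(y)`. -/
noncomputable def transfer [Fintype A] [DecidableEq A] (M : A → A → Bool)
    (ψ φ : (ℕ → A) → ℝ) (z : ℕ → A) : ℝ :=
  ∑ a ∈ Finset.univ.filter (fun a => M a (z 0) = true),
    Real.exp (-ψ (consN a z)) * φ (consN a z)

/-!
On a cylinder `[b]` of length `n`, the Gibbs property gives
`ν⁻_{z'}[b] = exp (S_n ψ(b·z) - S_n ψ(b·z')) ν⁻_z[b]`, and this exponent is the `n`-th partial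
sum of the series `θ`, which by Hölder continuity of `ψ` differs from `θ` on `[b]` by at most
`C α^{n+1} / (1 - α)`. Summing over the refinements of a cylinder and letting `n → ∞` shows that
`ν⁻_{z'}` and `e^θ ν⁻_z` agree on cylinders, hence everywhere. The same geometric bound gives
`|θ| ≤ C α / (1 - α) · α^{ω(z,z')}`, and continuity of `θ` comes from uniform convergence.
-/

open Filter Topology ENNReal

section Words

def pastWord (y : ℕ → A) (k : ℕ) : Fin k → A := fun i => y i

lemma wordConcat_pastWord_apply (y z : ℕ → A) (k n : ℕ) :
    wordConcat (pastWord y k) z n = if n < k then y (k - 1 - n) else z (n - k) := by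
  unfold wordConcat pastWord
  split_ifs <;> rfl

lemma shiftZinv_iterate_apply (x : ℤ → A) (k : ℕ) (n : ℤ) : shiftZinv^[k] x n = x (n - k) := by
  induction k generalizing n with
  | zero => simp
  | succ k ih => rw [Function.iterate_succ_apply', shiftZinv, ih]; push_cast; ring_nf

lemma futurePart_shiftZinv_iterate_concat (y z : ℕ → A) (k : ℕ) :
    futurePart (shiftZinv^[k] (concat y z)) = wordConcat (pastWord y k) z := by
  funext n
  rw [futurePart, shiftZinv_iterate_apply, wordConcat_pastWord_apply, concat]
  split_ifs <;> first | omega | congr 1; omega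

lemma shiftN_iterate_apply (w : ℕ → A) (j n : ℕ) : shiftN^[j] w n = w (n + j) := by
  induction j generalizing n with
  | zero => rfl
  | succ j ih => rw [Function.iterate_succ_apply', shiftN, ih, Nat.add_right_comm, Nat.add_assoc]

lemma shiftN_iterate_wordConcat_pastWord (y z : ℕ → A) {j n : ℕ} (hj : j ≤ n) :
    shiftN^[j] (wordConcat (pastWord y n) z) = wordConcat (pastWord y (n - j)) z := by
  funext m
  rw [shiftN_iterate_apply, wordConcat_pastWord_apply, wordConcat_pastWord_apply]
  split_ifs <;> first | omega | congr 1; omega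

lemma birkhoffN_wordConcat_pastWord (ψ : (ℕ → A) → ℝ) (y z : ℕ → A) (n : ℕ) :
    birkhoffN ψ n (wordConcat (pastWord y n) z) =
      ∑ k ∈ Finset.range n, ψ (wordConcat (pastWord y (k + 1)) z) := by
  rw [← Finset.sum_range_reflect]
  refine Finset.sum_congr rfl fun j hj => ?_
  have hj : j < n := Finset.mem_range.1 hj
  rw [shiftN_iterate_wordConcat_pastWord y z hj.le, show n - 1 - j + 1 = n - j by omega]

lemma pastWord_eq_of_mem_pastCyl {n : ℕ} {b : Fin n → A} {y : ℕ → A} (hy : y ∈ pastCyl b) :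
    pastWord y n = b :=
  funext hy

lemma wordConcat_agree_of_agree {k m : ℕ} (a : Fin k → A) {z z' : ℕ → A}
    (h : ∀ j < m, z j = z' j) : ∀ j < k + m, wordConcat a z j = wordConcat a z' j := by
  intro j hj
  unfold wordConcat
  split_ifs with hjk
  · rfl
  · exact h _ (by omega)

variable {M : A → A → Bool}

lemma wordConcat_mem_XplusSet {k : ℕ} {a : Fin k → A} {z : ℕ → A} (hz : z ∈ XplusSet M)
    (ha : wordCompat M a z) : wordConcat a z ∈ XplusSet M := by
  intro n
  unfold wordConcat
  rcases lt_trichotomy (n + 1) k with h | h | h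
  · rw [dif_pos (by omega), dif_pos h]
    convert ha.2 (k - 1 - (n + 1)) (by omega) using 3
    ext; simp only; omega
  · rw [dif_pos (by omega), dif_neg (by omega)]
    convert ha.1 (by omega) using 3
    · ext; simp only; omega
    · omega
  · rw [dif_neg (by omega), dif_neg (by omega), show n + 1 - k = n - k + 1 by omega]
    exact hz _

lemma wordCompat.of_zero_eq {k : ℕ} {a : Fin k → A} {z z' : ℕ → A} (ha : wordCompat M a z)
    (h0 : z 0 = z' 0) : wordCompat M a z' :=
  ⟨fun hk => h0 ▸ ha.1 hk, ha.2⟩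

lemma wordCompat_pastWord {y z : ℕ → A} (h : pastCompat M y z) (k : ℕ) :
    wordCompat M (pastWord y k) z :=
  ⟨fun _ => h.1, fun i _ => h.2 i⟩

lemma wordCompat_pastWord_of_mem_pastCyl {n k : ℕ} {b : Fin n → A} {y z : ℕ → A}
    (hb : wordCompat M b z) (hy : y ∈ pastCyl b) (hk : k ≤ n) :
    wordCompat M (pastWord y k) z := by
  refine ⟨fun hk0 => ?_, fun i hi => ?_⟩
  · simpa only [pastWord, hy ⟨0, by omega⟩] using hb.1 (by omega)
  · simpa only [pastWord, hy ⟨i, by omega⟩, hy ⟨i + 1, by omega⟩] using hb.2 i (by omega)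

end Words

section Theta

variable {M : A → A → Bool} {ψ : (ℕ → A) → ℝ} {C α : ℝ}

lemma abs_tsum_le_of_abs_le_geometric (hα0 : 0 ≤ α) (hα1 : α < 1) {g : ℕ → ℝ} {m : ℕ}
    (hg : ∀ k, |g k| ≤ C * α ^ (k + 1 + m)) : |∑' k, g k| ≤ C * α / (1 - α) * α ^ m := by
  have hgeom : HasSum (fun k => C * α ^ (k + 1 + m)) (C * α / (1 - α) * α ^ m) := by
    have h := (hasSum_geometric_of_lt_one hα0 hα1).mul_left (C * α ^ (m + 1))
    rwa [show (fun k => C * α ^ (m + 1) * α ^ k) = fun k => C * α ^ (k + 1 + m) from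
      funext fun k => by ring, show C * α ^ (m + 1) * (1 - α)⁻¹ = C * α / (1 - α) * α ^ m by
      rw [pow_succ]; field_simp] at h
  exact (Real.norm_eq_abs _).symm.trans_le
    (tsum_of_norm_bounded hgeom fun k => (Real.norm_eq_abs _).trans_le (hg k))

noncomputable def thetaTerm (ψ : (ℕ → A) → ℝ) (k : ℕ) (y z z' : ℕ → A) : ℝ :=
  ψ (wordConcat (pastWord y (k + 1)) z) - ψ (wordConcat (pastWord y (k + 1)) z')

/- Clamping `thetaTerm` to `[-C α^(k+1), C α^(k+1)]` changes nothing on compatible triples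
(by Hölder continuity) but makes the series for `theta` converge uniformly on all triples. -/
noncomputable def thetaTermClamped (ψ : (ℕ → A) → ℝ) (C α : ℝ) (k : ℕ) (y z z' : ℕ → A) : ℝ :=
  max (-(C * α ^ (k + 1))) (min (C * α ^ (k + 1)) (thetaTerm ψ k y z z'))

noncomputable def theta (ψ : (ℕ → A) → ℝ) (C α : ℝ) (y z z' : ℕ → A) : ℝ :=
  ∑' k, thetaTermClamped ψ C α k y z z'

lemma abs_thetaTermClamped_le (hC : 0 ≤ C) (hα0 : 0 ≤ α) (k : ℕ) (y z z' : ℕ → A) :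
    |thetaTermClamped ψ C α k y z z'| ≤ C * α ^ (k + 1) :=
  abs_le.2 ⟨le_max_left _ _, max_le (by linarith [show 0 ≤ C * α ^ (k + 1) by positivity])
    (min_le_left _ _)⟩

lemma summable_mul_pow_succ (hα0 : 0 ≤ α) (hα1 : α < 1) :
    Summable fun k : ℕ => C * α ^ (k + 1) :=
  ((summable_geometric_of_lt_one hα0 hα1).mul_left (C * α)).congr fun k => by ring

lemma abs_thetaTerm_le (hψ : HolderWithN (XplusSet M) C α ψ) {z z' : ℕ → A}
    (hz : z ∈ XplusSet M) (hz' : z' ∈ XplusSet M) (h0 : z 0 = z' 0) {y : ℕ → A} {k m : ℕ}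
    (hy : wordCompat M (pastWord y (k + 1)) z) (hm : ∀ j < m, z j = z' j) :
    |thetaTerm ψ k y z z'| ≤ C * α ^ (k + 1 + m) :=
  hψ _ (wordConcat_mem_XplusSet hz hy) _ (wordConcat_mem_XplusSet hz' (hy.of_zero_eq h0)) _
    (wordConcat_agree_of_agree _ hm)

lemma thetaTermClamped_eq_thetaTerm (hψ : HolderWithN (XplusSet M) C α ψ) {z z' : ℕ → A}
    (hz : z ∈ XplusSet M) (hz' : z' ∈ XplusSet M) (h0 : z 0 = z' 0) {y : ℕ → A} {k : ℕ}
    (hy : wordCompat M (pastWord y (k + 1)) z) :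
    thetaTermClamped ψ C α k y z z' = thetaTerm ψ k y z z' := by
  have h := abs_le.1 (abs_thetaTerm_le hψ hz hz' h0 hy (m := 0) (by simp))
  rw [thetaTermClamped, min_eq_right h.2, max_eq_right h.1]

lemma theta_eq_tsum_thetaTerm (hψ : HolderWithN (XplusSet M) C α ψ) {z z' : ℕ → A}
    (hz : z ∈ XplusSet M) (hz' : z' ∈ XplusSet M) (h0 : z 0 = z' 0) {y : ℕ → A}
    (hy : pastCompat M y z) : theta ψ C α y z z' = ∑' k, thetaTerm ψ k y z z' :=
  tsum_congr fun _ => thetaTermClamped_eq_thetaTerm hψ hz hz' h0 (wordCompat_pastWord hy _)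

lemma abs_theta_le (hα0 : 0 ≤ α) (hα1 : α < 1) (hψ : HolderWithN (XplusSet M) C α ψ)
    {z z' : ℕ → A} (hz : z ∈ XplusSet M) (hz' : z' ∈ XplusSet M) (h0 : z 0 = z' 0)
    {y : ℕ → A} (hy : pastCompat M y z) {m : ℕ} (hm : ∀ j < m, z j = z' j) :
    |theta ψ C α y z z'| ≤ C * α / (1 - α) * α ^ m := by
  rw [theta_eq_tsum_thetaTerm hψ hz hz' h0 hy]
  exact abs_tsum_le_of_abs_le_geometric hα0 hα1 fun k =>
    abs_thetaTerm_le hψ hz hz' h0 (wordCompat_pastWord hy _) hm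

lemma abs_theta_sub_sum_le (hC : 0 ≤ C) (hα0 : 0 ≤ α) (hα1 : α < 1) (n : ℕ) (y z z' : ℕ → A) :
    |theta ψ C α y z z' - ∑ k ∈ Finset.range n, thetaTermClamped ψ C α k y z z'| ≤
      C * α / (1 - α) * α ^ n := by
  have hs : Summable fun k => thetaTermClamped ψ C α k y z z' :=
    (summable_mul_pow_succ hα0 hα1).of_norm_bounded (abs_thetaTermClamped_le hC hα0 · y z z')
  rw [theta, ← hs.sum_add_tsum_nat_add n, add_sub_cancel_left]
  exact abs_tsum_le_of_abs_le_geometric hα0 hα1 fun k =>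
    (abs_thetaTermClamped_le hC hα0 _ y z z').trans_eq (by ring_nf)

lemma abs_theta_sub_birkhoffN_le (hC : 0 ≤ C) (hα0 : 0 ≤ α) (hα1 : α < 1)
    (hψ : HolderWithN (XplusSet M) C α ψ) {z z' : ℕ → A} (hz : z ∈ XplusSet M)
    (hz' : z' ∈ XplusSet M) (h0 : z 0 = z' 0) {n : ℕ} {b : Fin n → A} (hb : wordCompat M b z)
    {y : ℕ → A} (hy : y ∈ pastCyl b) :
    |theta ψ C α y z z' - (birkhoffN ψ n (wordConcat b z) - birkhoffN ψ n (wordConcat b z'))| ≤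
      C * α / (1 - α) * α ^ n := by
  have hpart : ∑ k ∈ Finset.range n, thetaTermClamped ψ C α k y z z' =
      birkhoffN ψ n (wordConcat b z) - birkhoffN ψ n (wordConcat b z') := by
    rw [← pastWord_eq_of_mem_pastCyl hy, birkhoffN_wordConcat_pastWord,
      birkhoffN_wordConcat_pastWord, ← Finset.sum_sub_distrib]
    exact Finset.sum_congr rfl fun k hk => thetaTermClamped_eq_thetaTerm hψ hz hz' h0
      (wordCompat_pastWord_of_mem_pastCyl hb hy (Finset.mem_range.1 hk))
  rw [← hpart]
  exact abs_theta_sub_sum_le hC hα0 hα1 n y z z'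

end Theta

section Continuity

variable [TopologicalSpace A] {M : A → A → Bool} {ψ : (ℕ → A) → ℝ} {C α : ℝ}

lemma continuousOn_of_holderWithN [DiscreteTopology A] (hα0 : 0 ≤ α) (hα1 : α < 1)
    {S : Set (ℕ → A)} {f : (ℕ → A) → ℝ} (hf : HolderWithN S C α f) : ContinuousOn f S := by
  intro z hz
  rw [ContinuousWithinAt, Metric.tendsto_nhds]
  intro ε hε
  obtain ⟨m, hm⟩ := (((tendsto_pow_atTop_nhds_zero_of_lt_one hα0 hα1).const_mul C).eventually
    (gt_mem_nhds (by rwa [mul_zero]))).exists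
  have hcyl : Set.pi (Set.Iio m) (fun j => {z j}) ∈ 𝓝 z :=
    (isOpen_set_pi (Set.finite_Iio m) fun j _ => isOpen_discrete _).mem_nhds fun _ _ => rfl
  filter_upwards [nhdsWithin_le_nhds hcyl, self_mem_nhdsWithin] with x hx hxS
  exact (hf x hxS z hz m hx).trans_lt hm

lemma continuous_wordConcat_pastWord (k : ℕ) :
    Continuous fun p : (ℕ → A) × (ℕ → A) => wordConcat (pastWord p.1 k) p.2 := by
  refine continuous_pi fun n => ?_
  simp only [wordConcat_pastWord_apply]
  split_ifs
  · exact (continuous_apply _).comp continuous_fst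
  · exact (continuous_apply _).comp continuous_snd

lemma continuousOn_theta [DiscreteTopology A] (hC : 0 ≤ C) (hα0 : 0 ≤ α) (hα1 : α < 1)
    (hψ : HolderWithN (XplusSet M) C α ψ) :
    ContinuousOn (fun p : (ℕ → A) × (ℕ → A) × (ℕ → A) => theta ψ C α p.1 p.2.1 p.2.2)
      {p | p.2.1 ∈ XplusSet M ∧ p.2.2 ∈ XplusSet M ∧ p.2.1 0 = p.2.2 0 ∧
        pastCompat M p.1 p.2.1} := by
  have hψc := continuousOn_of_holderWithN hα0 hα1 hψ
  refine continuousOn_tsum (fun k => ?_) (summable_mul_pow_succ hα0 hα1)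
    fun k p _ => abs_thetaTermClamped_le hC hα0 k p.1 p.2.1 p.2.2
  refine continuousOn_const.sup (continuousOn_const.inf (ContinuousOn.sub ?_ ?_))
  · exact hψc.comp ((continuous_wordConcat_pastWord _).comp
      (continuous_fst.prodMk continuous_snd.fst)).continuousOn fun p hp =>
        wordConcat_mem_XplusSet hp.1 (wordCompat_pastWord hp.2.2.2 _)
  · exact hψc.comp ((continuous_wordConcat_pastWord _).comp
      (continuous_fst.prodMk continuous_snd.snd)).continuousOn fun p hp =>
        wordConcat_mem_XplusSet hp.2.1 ((wordCompat_pastWord hp.2.2.2 _).of_zero_eq hp.2.2.1)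

lemma continuous_theta_left [DiscreteTopology A] (hC : 0 ≤ C) (hα0 : 0 ≤ α) (hα1 : α < 1)
    (z z' : ℕ → A) : Continuous fun y => theta ψ C α y z z' := by
  refine continuous_tsum (fun k => ?_) (summable_mul_pow_succ hα0 hα1)
    fun k y => abs_thetaTermClamped_le hC hα0 k y z z'
  exact (continuous_of_discreteTopology (f := fun w : Fin (k + 1) → A =>
    max (-(C * α ^ (k + 1))) (min (C * α ^ (k + 1))
      (ψ (wordConcat w z) - ψ (wordConcat w z'))))).comp
    (continuous_pi fun i => continuous_apply _)

end Continuity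

lemma le_of_eventually_le_mul_of_tendsto_one {ι : Type*} {l : Filter ι} [l.NeBot]
    {x y : ℝ≥0∞} {r : ι → ℝ≥0∞} (hr : Tendsto r l (𝓝 1)) (h : ∀ᶠ n in l, x ≤ r n * y) :
    x ≤ y :=
  ge_of_tendsto (by simpa using ENNReal.Tendsto.mul_const hr (.inl one_ne_zero)) h

section Cylinders

lemma pastCyl_zero (a : Fin 0 → A) : pastCyl a = Set.univ :=
  Set.eq_univ_of_forall fun _ i => i.elim0

lemma pastCyl_subset_of_mem {k n : ℕ} (hkn : k ≤ n) {a : Fin k → A} {b : Fin n → A}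
    {y : ℕ → A} (hya : y ∈ pastCyl a) (hyb : y ∈ pastCyl b) : pastCyl b ⊆ pastCyl a :=
  fun _ hw i => ((hw (Fin.castLE hkn i)).trans (hyb (Fin.castLE hkn i)).symm).trans (hya i)

lemma pairwise_disjoint_pastCyl (n : ℕ) :
    Pairwise (Function.onFun Disjoint fun b : Fin n → A => pastCyl b) := fun _ _ hne =>
  Set.disjoint_left.2 fun _ hy hy' => hne (funext fun i => (hy i).symm.trans (hy' i))

lemma pastCyl_eq_iUnion {k n : ℕ} (hkn : k ≤ n) (a : Fin k → A) :
    pastCyl a = ⋃ b : {b : Fin n → A // ∀ i, b (Fin.castLE hkn i) = a i}, pastCyl b.1 := by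
  ext y
  simp only [Set.mem_iUnion]
  exact ⟨fun hy => ⟨⟨pastWord y n, hy⟩, fun _ => rfl⟩, fun ⟨b, hyb⟩ i => (hyb _).trans (b.2 i)⟩

variable (A) in
def pastCylinders : Set (Set (ℕ → A)) := {s | ∃ (k : ℕ) (a : Fin k → A), pastCyl a = s}

lemma isPiSystem_pastCylinders : IsPiSystem (pastCylinders A) := by
  rintro _ ⟨k, a, rfl⟩ _ ⟨n, b, rfl⟩ ⟨y, hya, hyb⟩
  rcases le_total k n with h | h
  · rw [Set.inter_eq_right.2 (pastCyl_subset_of_mem h hya hyb)]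
    exact ⟨n, b, rfl⟩
  · rw [Set.inter_eq_left.2 (pastCyl_subset_of_mem h hyb hya)]
    exact ⟨k, a, rfl⟩

variable [MeasurableSpace A]

lemma measurableSet_pastCyl [MeasurableSingletonClass A] {k : ℕ} (a : Fin k → A) :
    MeasurableSet (pastCyl a) := by
  rw [show pastCyl a = ⋂ i : Fin k, (fun y : ℕ → A => y i) ⁻¹' {a i} by ext; simp [pastCyl]]
  exact .iInter fun i => measurable_pi_apply _ (measurableSet_singleton _)

lemma measure_pastCyl_eq_tsum [MeasurableSingletonClass A] [Countable A]
    (μ : Measure (ℕ → A)) {k n : ℕ} (hkn : k ≤ n) (a : Fin k → A) :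
    μ (pastCyl a) =
      ∑' b : {b : Fin n → A // ∀ i, b (Fin.castLE hkn i) = a i}, μ (pastCyl b.1) := by
  rw [pastCyl_eq_iUnion hkn a]
  exact measure_iUnion (fun _ _ h => pairwise_disjoint_pastCyl n (Subtype.val_injective.ne h))
    fun b => measurableSet_pastCyl b.1

lemma pi_eq_generateFrom_pastCylinders [MeasurableSingletonClass A] [Countable A] :
    (MeasurableSpace.pi : MeasurableSpace (ℕ → A)) =
      MeasurableSpace.generateFrom (pastCylinders A) := by
  refine le_antisymm (iSup_le fun i => Measurable.comap_le ?_)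
    (MeasurableSpace.generateFrom_le fun _ ⟨_, a, h⟩ => h ▸ measurableSet_pastCyl a)
  refine @measurable_to_countable' _ _ _ _ (.generateFrom _) _ fun c => ?_
  have hc : (fun y : ℕ → A => y i) ⁻¹' {c} =
      ⋃ b : {b : Fin (i + 1) → A // b (Fin.last i) = c}, pastCyl b.1 := by
    ext y
    simp only [Set.mem_preimage, Set.mem_singleton_iff, Set.mem_iUnion]
    exact ⟨fun hy => ⟨⟨pastWord y (i + 1), hy⟩, fun _ => rfl⟩,
      fun ⟨b, hyb⟩ => (hyb (Fin.last i)).trans b.2⟩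
  rw [hc]
  exact .iUnion fun b => MeasurableSpace.measurableSet_generateFrom ⟨_, b.1, rfl⟩

lemma measure_pastCyl_le_of_forall_le_mul [MeasurableSingletonClass A] [Countable A]
    {μ ν : Measure (ℕ → A)} {r : ℕ → ℝ≥0∞} (hr : Tendsto r atTop (𝓝 1))
    (h : ∀ n (b : Fin n → A), μ (pastCyl b) ≤ r n * ν (pastCyl b)) {k : ℕ} (a : Fin k → A) :
    μ (pastCyl a) ≤ ν (pastCyl a) := by
  refine le_of_eventually_le_mul_of_tendsto_one hr (eventually_atTop.2 ⟨k, fun n hkn => ?_⟩)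
  rw [measure_pastCyl_eq_tsum μ hkn, measure_pastCyl_eq_tsum ν hkn, ← ENNReal.tsum_mul_left]
  exact ENNReal.tsum_le_tsum fun b => h n b.1

lemma MeasureTheory.Measure.ext_of_forall_pastCyl_le_mul [MeasurableSingletonClass A] [Countable A]
    {μ ν : Measure (ℕ → A)} [IsFiniteMeasure μ] {r : ℕ → ℝ≥0∞} (hr : Tendsto r atTop (𝓝 1))
    (hμν : ∀ n (b : Fin n → A), μ (pastCyl b) ≤ r n * ν (pastCyl b))
    (hνμ : ∀ n (b : Fin n → A), ν (pastCyl b) ≤ r n * μ (pastCyl b)) : μ = ν := by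
  have hcyl : ∀ k (a : Fin k → A), μ (pastCyl a) = ν (pastCyl a) := fun _ a =>
    (measure_pastCyl_le_of_forall_le_mul hr hμν a).antisymm
      (measure_pastCyl_le_of_forall_le_mul hr hνμ a)
  refine ext_of_generate_finite _ pi_eq_generateFrom_pastCylinders isPiSystem_pastCylinders
    (fun _ ⟨k, a, h⟩ => h ▸ hcyl k a) ?_
  simpa only [pastCyl_zero] using hcyl 0 Fin.elim0

end Cylinders

section Density

variable {X : Type*} [MeasurableSpace X] (μ : Measure X) [SFinite μ] {f : X → ℝ} {s : Set X}
  {c δ : ℝ}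

lemma withDensity_exp_le (hs : MeasurableSet s) (h : ∀ᵐ y ∂μ, y ∈ s → |f y - c| ≤ δ) :
    μ.withDensity (fun y => ENNReal.ofReal (Real.exp (f y))) s ≤
      ENNReal.ofReal (Real.exp δ) * (ENNReal.ofReal (Real.exp c) * μ s) := by
  rw [withDensity_apply' _ s, ← mul_assoc, ← ENNReal.ofReal_mul (Real.exp_nonneg _),
    ← Real.exp_add, ← setLIntegral_const]
  refine setLIntegral_mono_ae' hs (h.mono fun y hy hys => ?_)
  gcongr
  linarith [(abs_le.1 (hy hys)).2]

lemma le_withDensity_exp (hs : MeasurableSet s) (h : ∀ᵐ y ∂μ, y ∈ s → |f y - c| ≤ δ) :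
    ENNReal.ofReal (Real.exp c) * μ s ≤
      ENNReal.ofReal (Real.exp δ) * μ.withDensity (fun y => ENNReal.ofReal (Real.exp (f y))) s := by
  calc ENNReal.ofReal (Real.exp c) * μ s
      = ENNReal.ofReal (Real.exp δ) * ∫⁻ _ in s, ENNReal.ofReal (Real.exp (c - δ)) ∂μ := by
        rw [setLIntegral_const, ← mul_assoc, ← ENNReal.ofReal_mul (Real.exp_nonneg _),
          ← Real.exp_add, add_sub_cancel]
    _ ≤ _ := by
        rw [withDensity_apply' _ s]
        refine mul_le_mul_right (setLIntegral_mono_ae' hs (h.mono fun y hy hys => ?_)) _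
        gcongr
        linarith [(abs_le.1 (hy hys)).1]

end Density

section CondGibbs

variable [MeasurableSpace A] {M : A → A → Bool} {ψ : (ℕ → A) → ℝ}
  {νm : (ℕ → A) → Measure (ℕ → A)} {z z' : ℕ → A}

lemma IsCondGibbs.isProbabilityMeasure (hνm : IsCondGibbs M ψ νm) (hz : z ∈ XplusSet M) :
    IsProbabilityMeasure (νm z) := by
  have h := (hνm z hz 0 Fin.elim0).1 ⟨fun h => (lt_irrefl 0 h).elim, fun _ h => by omega⟩
  rw [pastCyl_zero] at h
  exact ⟨by simpa [birkhoffN] using h⟩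

lemma IsCondGibbs.measure_pastCyl_eq (hνm : IsCondGibbs M ψ νm) (hz : z ∈ XplusSet M)
    (hz' : z' ∈ XplusSet M) (h0 : z 0 = z' 0) {n : ℕ} (b : Fin n → A) :
    νm z' (pastCyl b) = ENNReal.ofReal (Real.exp
      (birkhoffN ψ n (wordConcat b z) - birkhoffN ψ n (wordConcat b z'))) * νm z (pastCyl b) := by
  by_cases hb : wordCompat M b z
  · rw [(hνm z hz n b).1 hb, (hνm z' hz' n b).1 (hb.of_zero_eq h0),
      ← ENNReal.ofReal_mul (Real.exp_nonneg _), ← Real.exp_add]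
    congr 2
    ring
  · rw [(hνm z hz n b).2 hb, (hνm z' hz' n b).2 fun hb' => hb (hb'.of_zero_eq h0.symm), mul_zero]

variable {C α : ℝ}

lemma IsCondGibbs.ae_abs_theta_sub_birkhoffN_le (hνm : IsCondGibbs M ψ νm) (hC : 0 ≤ C)
    (hα0 : 0 ≤ α) (hα1 : α < 1) (hψ : HolderWithN (XplusSet M) C α ψ) (hz : z ∈ XplusSet M)
    (hz' : z' ∈ XplusSet M) (h0 : z 0 = z' 0) {n : ℕ} (b : Fin n → A) :
    ∀ᵐ y ∂νm z, y ∈ pastCyl b →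
      |theta ψ C α y z z' - (birkhoffN ψ n (wordConcat b z) - birkhoffN ψ n (wordConcat b z'))| ≤
        C * α / (1 - α) * α ^ n := by
  by_cases hb : wordCompat M b z
  · exact ae_of_all _ fun y => abs_theta_sub_birkhoffN_le hC hα0 hα1 hψ hz hz' h0 hb
  · filter_upwards [measure_eq_zero_iff_ae_notMem.1 ((hνm z hz n b).2 hb)] with y hy hyb
    exact absurd hyb hy

theorem IsCondGibbs.eq_withDensity_theta [MeasurableSingletonClass A] [Countable A]
    (hνm : IsCondGibbs M ψ νm) (hC : 0 ≤ C) (hα0 : 0 ≤ α) (hα1 : α < 1)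
    (hψ : HolderWithN (XplusSet M) C α ψ) (hz : z ∈ XplusSet M) (hz' : z' ∈ XplusSet M)
    (h0 : z 0 = z' 0) :
    νm z' = (νm z).withDensity fun y => ENNReal.ofReal (Real.exp (theta ψ C α y z z')) := by
  have := hνm.isProbabilityMeasure hz
  have := hνm.isProbabilityMeasure hz'
  have hδ : Tendsto (fun n : ℕ => C * α / (1 - α) * α ^ n) atTop (𝓝 0) := by
    simpa using (tendsto_pow_atTop_nhds_zero_of_lt_one hα0 hα1).const_mul (C * α / (1 - α))
  refine Measure.ext_of_forall_pastCyl_le_mul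
    (r := fun n => ENNReal.ofReal (Real.exp (C * α / (1 - α) * α ^ n))) ?_ (fun n b => ?_)
    (fun n b => ?_)
  · simpa [Function.comp_def] using
      ((ENNReal.continuous_ofReal.comp Real.continuous_exp).tendsto 0).comp hδ
  · rw [hνm.measure_pastCyl_eq hz hz' h0 b]
    exact le_withDensity_exp _ (measurableSet_pastCyl b)
      (hνm.ae_abs_theta_sub_birkhoffN_le hC hα0 hα1 hψ hz hz' h0 b)
  · rw [hνm.measure_pastCyl_eq hz hz' h0 b]
    exact withDensity_exp_le _ (measurableSet_pastCyl b)
      (hνm.ae_abs_theta_sub_birkhoffN_le hC hα0 hα1 hψ hz hz' h0 b)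

end CondGibbs

theorem statement5_general [Fintype A] [MeasurableSpace A] [MeasurableSingletonClass A]
    [TopologicalSpace A] [DiscreteTopology A]
    (M : A → A → Bool) (ψ : (ℕ → A) → ℝ) (C α : ℝ) (hC : 0 < C) (hα0 : 0 < α) (hα1 : α < 1)
    (hψ : HolderWithN (XplusSet M) C α ψ)
    (νm : (ℕ → A) → Measure (ℕ → A)) (hνm : IsCondGibbs M ψ νm) :
    ∃ θ : (ℕ → A) → (ℕ → A) → (ℕ → A) → ℝ,
      ContinuousOn (fun p : (ℕ → A) × (ℕ → A) × (ℕ → A) => θ p.1 p.2.1 p.2.2)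
        {p | p.2.1 ∈ XplusSet M ∧ p.2.2 ∈ XplusSet M ∧ p.2.1 0 = p.2.2 0 ∧
          pastCompat M p.1 p.2.1} ∧
      (∀ z ∈ XplusSet M, ∀ z' ∈ XplusSet M, z 0 = z' 0 →
        ∀ φ : (ℕ → A) → ℝ, Continuous φ →
          ∫ y, φ y ∂νm z' = ∫ y, φ y * Real.exp (θ y z z') ∂νm z) ∧
      (∃ c : ℝ, 0 < c ∧ ∀ z ∈ XplusSet M, ∀ z' ∈ XplusSet M, z 0 = z' 0 →
        ∀ y : ℕ → A, pastCompat M y z →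
          ∀ k : ℕ, (∀ j < k, z j = z' j) → |θ y z z'| ≤ c * α ^ k) ∧
      (∀ z ∈ XplusSet M, ∀ z' ∈ XplusSet M, z 0 = z' 0 →
        ∀ y : ℕ → A, pastCompat M y z →
          θ y z z' = ∑' k : ℕ, (ψ (futurePart (shiftZinv^[k + 1] (concat y z))) -
            ψ (futurePart (shiftZinv^[k + 1] (concat y z'))))) := by
  refine ⟨theta ψ C α, continuousOn_theta hC.le hα0.le hα1 hψ, ?_,
    ⟨C * α / (1 - α), div_pos (mul_pos hC hα0) (sub_pos.2 hα1), ?_⟩, ?_⟩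
  · intro z hz z' hz' h0 φ _
    rw [hνm.eq_withDensity_theta hC.le hα0.le hα1 hψ hz hz' h0,
      integral_withDensity_eq_integral_toReal_smul
        (continuous_theta_left hC.le hα0.le hα1 z z').measurable.exp.ennreal_ofReal
        (ae_of_all _ fun _ => ENNReal.ofReal_lt_top)]
    simp only [ENNReal.toReal_ofReal (Real.exp_nonneg _), smul_eq_mul, mul_comm]
  · intro z hz z' hz' h0 y hy k hk
    exact abs_theta_le hα0.le hα1 hψ hz hz' h0 hy hk
  · intro z hz z' hz' h0 y hy
    simp only [futurePart_shiftZinv_iterate_concat]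
    exact theta_eq_tsum_thetaTerm hψ hz hz' h0 hy

/-- Equivalence of the conditional measures `ν⁻_z` and `ν⁻_{z'}`: there is a continuous
density `e^θ` with `|θ(y,z,z')| ≤ c α^{ω(z,z')}`, given by
`θ(y,z,z') = ∑_{k≥1} (ψ(T^{-k}(y·z)) - ψ(T^{-k}(y·z')))`. -/
theorem statement5 [Fintype A] [DecidableEq A] [MeasurableSpace A] [MeasurableSingletonClass A]
    [TopologicalSpace A] [DiscreteTopology A]
    (M : A → A → Bool) (ψ : (ℕ → A) → ℝ) (C α : ℝ) (hC : 0 < C) (hα0 : 0 < α) (hα1 : α < 1)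
    (hψ : HolderWithN (XplusSet M) C α ψ)
    (hnorm : ∀ z ∈ XplusSet M, transfer M ψ (fun _ => (1 : ℝ)) z = 1)
    (νm : (ℕ → A) → Measure (ℕ → A)) (hνm : IsCondGibbs M ψ νm) :
    ∃ θ : (ℕ → A) → (ℕ → A) → (ℕ → A) → ℝ,
      ContinuousOn (fun p : (ℕ → A) × (ℕ → A) × (ℕ → A) => θ p.1 p.2.1 p.2.2)
        {p | p.2.1 ∈ XplusSet M ∧ p.2.2 ∈ XplusSet M ∧ p.2.1 0 = p.2.2 0 ∧
          pastCompat M p.1 p.2.1} ∧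
      (∀ z ∈ XplusSet M, ∀ z' ∈ XplusSet M, z 0 = z' 0 →
        ∀ φ : (ℕ → A) → ℝ, Continuous φ →
          ∫ y, φ y ∂νm z' = ∫ y, φ y * Real.exp (θ y z z') ∂νm z) ∧
      (∃ c : ℝ, 0 < c ∧ ∀ z ∈ XplusSet M, ∀ z' ∈ XplusSet M, z 0 = z' 0 →
        ∀ y : ℕ → A, pastCompat M y z →
          ∀ k : ℕ, (∀ j < k, z j = z' j) → |θ y z z'| ≤ c * α ^ k) ∧
      (∀ z ∈ XplusSet M, ∀ z' ∈ XplusSet M, z 0 = z' 0 →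
        ∀ y : ℕ → A, pastCompat M y z →
          θ y z z' = ∑' k : ℕ, (ψ (futurePart (shiftZinv^[k + 1] (concat y z))) -
            ψ (futurePart (shiftZinv^[k + 1] (concat y z'))))) :=
  statement5_general M ψ C α hC hα0 hα1 hψ νm hνm
end

section
/- Let ε ∈ (0,1/4) and let ρ_ε²(u) = ε^{-2} ρ(u/ε²) where ρ is the (non-negative, integrable, total mass 1) Fourier transform density of t ↦ (1−|t|)1{|t|≤1}. If f, g : ℝ → ℝ₊ are integrable and f(t) ≤ g(t+v) for all t ∈ ℝ and all |v| ≤ ε, then for all u ∈ ℝ: f(u) ≤ (1−2ε)^{-1} (g * ρ_{ε²})(u) and g(u) ≥ (f * ρ_{ε²})(u) − ∫_{|v|>ε} f(u−v) ρ_{ε²}(v) dv. -/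
open MeasureTheory

/-- The kernel `ρ`: the Fourier transform of the triangle function
`t ↦ (1-|t|) 1_{|t| ≤ 1}` (the Fejér kernel, a non-negative probability density). -/
noncomputable def triangleFT (u : ℝ) : ℝ :=
  (∫ t : ℝ, Complex.exp (-(2 * Real.pi * t * u) * Complex.I) *
    (if |t| ≤ 1 then ((1 - |t| : ℝ) : ℂ) else 0)).re

/-- The rescaled kernel `ρ_δ(u) = δ⁻¹ ρ(u/δ)`. -/
noncomputable def smoothK (δ u : ℝ) : ℝ := δ⁻¹ * triangleFT (u / δ)

/-! The kernel is `ρ(u) = sinc(πu)²`: the Fourier integral of the triangle function is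
computed directly, and Fourier inversion at `0` gives `∫ ρ = 1`. Since `u² ρ(u) ≤ 1`, the
rescaled kernel `ρ_{ε²}` carries mass at most `2ε` outside `[-ε, ε]`. For `|v| ≤ ε` the
domination gives `f(u) ≤ g(u - v)` and `f(u - v) ≤ g(u)`; integrating these against `ρ_{ε²}`
over `[-ε, ε]` yields the two inequalities. -/

open Real Set
open scoped FourierTransform

namespace Real

lemma mul_sinc (x : ℝ) : x * sinc x = sin x := by
  rcases eq_or_ne x 0 with rfl | hx
  · simp
  · rw [sinc_of_ne_zero hx]
    field_simp

lemma sinc_sq_le_one (x : ℝ) : sinc x ^ 2 ≤ 1 :=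
  (sq_le_one_iff_abs_le_one _).2 (abs_sinc_le_one x)

lemma sq_mul_sinc_sq_le_one (x : ℝ) : x ^ 2 * sinc x ^ 2 ≤ 1 := by
  rw [← mul_pow, mul_sinc]
  exact sin_sq_le_one x

lemma sinc_sq_le_two_mul_inv_one_add_sq (x : ℝ) : sinc x ^ 2 ≤ 2 * (1 + x ^ 2)⁻¹ := by
  rw [← div_eq_mul_inv, le_div_iff₀ (by positivity)]
  nlinarith [sinc_sq_le_one x, sq_mul_sinc_sq_le_one x]

end Real

noncomputable def triangle (t : ℝ) : ℝ := max (1 - |t|) 0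

lemma continuous_triangle : Continuous triangle := by
  unfold triangle
  fun_prop

lemma triangle_neg (t : ℝ) : triangle (-t) = triangle t := by
  simp [triangle]

lemma triangle_of_nonneg {t : ℝ} (ht₀ : 0 ≤ t) (ht₁ : t ≤ 1) : triangle t = 1 - t := by
  rw [triangle, abs_of_nonneg ht₀, max_eq_left (by linarith)]

lemma support_triangle_subset : Function.support triangle ⊆ Ioo (-1) 1 := by
  intro t ht
  by_contra h
  rw [mem_Ioo, ← abs_lt] at h
  exact ht (max_eq_right (by linarith))

lemma integrable_triangle : Integrable triangle :=
  continuous_triangle.integrable_of_hasCompactSupport <|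
    HasCompactSupport.intro' isCompact_Icc isClosed_Icc
      fun _ ht ↦ Function.notMem_support.1 fun h ↦
        ht (Ioo_subset_Icc_self (support_triangle_subset h))

lemma integral_two_mul_cos_two_mul_triangle (a : ℝ) :
    ∫ t in (0:ℝ)..1, 2 * cos (2 * a * t) * triangle t = sinc a ^ 2 := by
  have htri : ∀ t ∈ uIcc (0:ℝ) 1,
      2 * cos (2 * a * t) * triangle t = 2 * cos (2 * a * t) * (1 - t) := by
    intro t ht
    rw [uIcc_of_le zero_le_one] at ht
    rw [triangle_of_nonneg ht.1 ht.2]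
  rw [intervalIntegral.integral_congr htri]
  rcases eq_or_ne a 0 with rfl | ha
  · simp only [mul_zero, zero_mul, cos_zero, mul_one, sinc_zero, one_pow]
    rw [intervalIntegral.integral_const_mul, intervalIntegral.integral_sub intervalIntegrable_const
      intervalIntegral.intervalIntegrable_id]
    norm_num
  have hderiv : ∀ t ∈ uIcc (0:ℝ) 1, HasDerivAt
      (fun s ↦ (1 - s) * sin (2 * a * s) / a - cos (2 * a * s) / (2 * a ^ 2))
      (2 * cos (2 * a * t) * (1 - t)) t := by
    intro t _
    have hs := ((hasDerivAt_id t).const_mul (2 * a)).sin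
    have hc := ((hasDerivAt_id t).const_mul (2 * a)).cos
    refine ((((hasDerivAt_id t).const_sub 1).mul hs).div_const a).sub
      (hc.div_const (2 * a ^ 2)) |>.congr_deriv ?_
    simp only [id]
    field_simp
    ring
  rw [intervalIntegral.integral_eq_sub_of_hasDerivAt hderiv
    (Continuous.intervalIntegrable (by fun_prop) _ _), sinc_of_ne_zero ha]
  simp only [mul_one, mul_zero, cos_zero, sin_zero, sub_self, zero_mul, zero_div, zero_sub]
  have hcos := cos_sq a
  field_simp
  linear_combination 2 * hcos - 2 * sin_sq_add_cos_sq a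

lemma fourier_triangle (u : ℝ) :
    𝓕 (fun t ↦ (triangle t : ℂ)) u = (sinc (π * u) ^ 2 : ℝ) := by
  set h : ℝ → ℂ := fun t ↦ Complex.exp (↑(-2 * π * t * u) * Complex.I) • (triangle t : ℂ)
  have hcont : Continuous h := by
    have := continuous_triangle
    fun_prop
  have hsupp : Function.support h ⊆ Ioc (-1) 1 := fun t ht ↦
    Ioo_subset_Ioc_self (support_triangle_subset fun h0 ↦ ht (by simp [h, h0]))
  have hneg : ∫ t in (-1:ℝ)..0, h t = ∫ t in (0:ℝ)..1, h (-t) := by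
    rw [intervalIntegral.integral_comp_neg, neg_zero]
  have heven : ∀ t, h (-t) + h t = ((2 * cos (2 * (π * u) * t) * triangle t : ℝ) : ℂ) := by
    intro t
    simp only [h, triangle_neg, smul_eq_mul]
    push_cast
    have := Complex.two_cos (2 * (π * u) * t)
    ring_nf at this ⊢
    linear_combination -(triangle t : ℂ) * this
  rw [Real.fourier_real_eq_integral_exp_smul,
    ← intervalIntegral.integral_eq_integral_of_support_subset hsupp,
    ← intervalIntegral.integral_add_adjacent_intervals (b := 0) (hcont.intervalIntegrable _ _)
      (hcont.intervalIntegrable _ _), hneg, ← intervalIntegral.integral_add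
      ((show Continuous fun t ↦ h (-t) from hcont.comp continuous_neg).intervalIntegrable _ _)
      (hcont.intervalIntegrable _ _)]
  simp only [heven, intervalIntegral.integral_ofReal, integral_two_mul_cos_two_mul_triangle]

lemma triangleFT_eq (u : ℝ) : triangleFT u = sinc (π * u) ^ 2 := by
  have hind : ∀ t : ℝ, (if |t| ≤ 1 then ((1 - |t| : ℝ) : ℂ) else 0) = triangle t := by
    intro t
    split_ifs with ht
    · rw [triangle, max_eq_left (by linarith)]
    · rw [triangle, max_eq_right (by linarith), Complex.ofReal_zero]
  rw [triangleFT, ← Complex.ofReal_re (sinc (π * u) ^ 2), ← fourier_triangle,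
    Real.fourier_real_eq_integral_exp_smul]
  congr 2 with t
  rw [hind, smul_eq_mul]
  push_cast
  ring_nf

lemma triangleFT_nonneg (u : ℝ) : 0 ≤ triangleFT u := by
  rw [triangleFT_eq]
  positivity

lemma triangleFT_le_one (u : ℝ) : triangleFT u ≤ 1 := by
  rw [triangleFT_eq]
  exact sinc_sq_le_one _

lemma triangleFT_neg (u : ℝ) : triangleFT (-u) = triangleFT u := by
  rw [triangleFT_eq, triangleFT_eq, mul_neg, sinc_neg]

lemma sq_mul_triangleFT_le_one (u : ℝ) : u ^ 2 * triangleFT u ≤ 1 := by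
  rw [triangleFT_eq]
  have hπ : u ^ 2 ≤ (π * u) ^ 2 := by
    rw [mul_pow]
    exact le_mul_of_one_le_left (sq_nonneg u) (one_le_pow₀ (by linarith [pi_gt_three]))
  calc u ^ 2 * sinc (π * u) ^ 2 ≤ (π * u) ^ 2 * sinc (π * u) ^ 2 := by gcongr
    _ ≤ 1 := sq_mul_sinc_sq_le_one _

lemma continuous_triangleFT : Continuous triangleFT := by
  simp_rw [funext triangleFT_eq]
  fun_prop

lemma integrable_triangleFT : Integrable triangleFT := by
  refine ((integrable_inv_one_add_sq.comp_mul_left' pi_ne_zero).const_mul 2).mono'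
    continuous_triangleFT.aestronglyMeasurable (Filter.Eventually.of_forall fun u ↦ ?_)
  rw [norm_of_nonneg (triangleFT_nonneg u), triangleFT_eq]
  exact sinc_sq_le_two_mul_inv_one_add_sq _

lemma integral_triangleFT : ∫ u, triangleFT u = 1 := by
  have hF : 𝓕 (fun t ↦ (triangle t : ℂ)) = fun u ↦ (triangleFT u : ℂ) := by
    ext u
    rw [fourier_triangle, triangleFT_eq]
  have hinv : 𝓕⁻ (𝓕 (fun t ↦ (triangle t : ℂ))) 0 = triangle 0 :=
    integrable_triangle.ofReal.fourierInv_fourier_eq (hF ▸ integrable_triangleFT.ofReal)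
      (v := 0) (Complex.continuous_ofReal.comp continuous_triangle).continuousAt
  rw [hF, Real.fourierInv_eq] at hinv
  simp only [inner_zero_right, AddChar.map_zero_eq_one, one_smul, integral_complex_ofReal,
    Complex.ofReal_inj] at hinv
  simpa [triangle] using hinv

lemma measurableSet_lt_abs (ε : ℝ) : MeasurableSet {v : ℝ | ε < |v|} :=
  measurableSet_lt measurable_const measurable_abs

section smoothK

variable {δ : ℝ}

lemma smoothK_nonneg (hδ : 0 ≤ δ) (u : ℝ) : 0 ≤ smoothK δ u :=
  mul_nonneg (inv_nonneg.2 hδ) (triangleFT_nonneg _)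

lemma smoothK_le_inv (hδ : 0 ≤ δ) (u : ℝ) : smoothK δ u ≤ δ⁻¹ :=
  mul_le_of_le_one_right (inv_nonneg.2 hδ) (triangleFT_le_one _)

lemma smoothK_abs (u : ℝ) : smoothK δ |u| = smoothK δ u := by
  rcases abs_choice u with h | h <;> rw [h]
  rw [smoothK, smoothK, neg_div, triangleFT_neg]

lemma continuous_smoothK (δ : ℝ) : Continuous (smoothK δ) :=
  continuous_const.mul (continuous_triangleFT.comp (continuous_id.div_const δ))

lemma integrable_smoothK (hδ : δ ≠ 0) : Integrable (smoothK δ) :=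
  (integrable_triangleFT.comp_div hδ).const_mul _

lemma integral_smoothK (hδ : 0 < δ) : ∫ u, smoothK δ u = 1 := by
  simp only [smoothK]
  rw [integral_const_mul, Measure.integral_comp_div, integral_triangleFT, smul_eq_mul,
    abs_of_pos hδ, mul_one, inv_mul_cancel₀ hδ.ne']

lemma smoothK_le_div_sq (hδ : 0 < δ) {u : ℝ} (hu : u ≠ 0) : smoothK δ u ≤ δ / u ^ 2 := by
  have h := sq_mul_triangleFT_le_one (u / δ)
  rw [smoothK, le_div_iff₀ (by positivity)]
  rw [div_pow, div_mul_eq_mul_div, div_le_one (by positivity)] at h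
  calc δ⁻¹ * triangleFT (u / δ) * u ^ 2 = (u ^ 2 * triangleFT (u / δ)) / δ := by ring
    _ ≤ δ ^ 2 / δ := by gcongr
    _ = δ := by field_simp

lemma setIntegral_smoothK_abs_gt_le (hδ : 0 < δ) {ε : ℝ} (hε : 0 < ε) :
    ∫ v in {v | ε < |v|}, smoothK δ v ≤ 2 * δ / ε := by
  have hsymm : ∫ v in {v | ε < |v|}, smoothK δ v = 2 * ∫ v in Ioi ε, smoothK δ v := by
    have h := integral_comp_abs (f := (Ioi ε).indicator (smoothK δ))
    rw [setIntegral_indicator measurableSet_Ioi, Ioi_inter_Ioi, sup_of_le_right hε.le] at h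
    rw [← h, ← integral_indicator (measurableSet_lt_abs ε)]
    congr 1 with v
    by_cases hv : ε < |v| <;> simp [indicator, hv, smoothK_abs]
  have hI := integrableOn_Ioi_rpow_of_lt (by norm_num : (-2 : ℝ) < -1) hε
  have hint := integral_Ioi_rpow_of_lt (by norm_num : (-2 : ℝ) < -1) hε
  norm_num at hI hint
  calc ∫ v in {v | ε < |v|}, smoothK δ v
      = 2 * ∫ v in Ioi ε, smoothK δ v := hsymm
    _ ≤ 2 * ∫ v in Ioi ε, δ * (v ^ 2)⁻¹ := by
      refine mul_le_mul_of_nonneg_left (setIntegral_mono_on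
        (integrable_smoothK hδ.ne').integrableOn (hI.const_mul δ) measurableSet_Ioi
        fun v hv ↦ ?_) zero_le_two
      exact (smoothK_le_div_sq hδ (hε.trans hv).ne').trans_eq (div_eq_mul_inv _ _)
    _ = 2 * δ / ε := by
      rw [integral_const_mul, hint, rpow_neg_one]
      ring

lemma one_sub_le_setIntegral_smoothK_abs_le (hδ : 0 < δ) {ε : ℝ} (hε : 0 < ε) :
    1 - 2 * δ / ε ≤ ∫ v in {v | ε < |v|}ᶜ, smoothK δ v := by
  have hsplit := integral_add_compl (measurableSet_lt_abs ε) (integrable_smoothK hδ.ne')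
  rw [integral_smoothK hδ] at hsplit
  linarith [setIntegral_smoothK_abs_gt_le hδ hε]

lemma MeasureTheory.Integrable.comp_sub_mul_smoothK {h : ℝ → ℝ} (hh : Integrable h)
    (hδ : 0 ≤ δ) (u : ℝ) : Integrable fun v ↦ h (u - v) * smoothK δ v :=
  (hh.comp_sub_left u).mul_bdd (continuous_smoothK δ).aestronglyMeasurable <|
    Filter.Eventually.of_forall fun v ↦ (norm_of_nonneg (smoothK_nonneg hδ v)).trans_le
      (smoothK_le_inv hδ v)

end smoothK

section Domination

variable {K h : ℝ → ℝ} {ε : ℝ}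

lemma le_inv_mul_integral_mul_of_forall_abs_le {a c : ℝ} (hK₀ : ∀ v, 0 ≤ K v)
    (hK : Integrable K) (hh₀ : ∀ v, 0 ≤ h v) (hhK : Integrable fun v ↦ h v * K v) (ha : 0 ≤ a)
    (hc : 0 < c) (hmass : c ≤ ∫ v in {v | ε < |v|}ᶜ, K v) (hle : ∀ v, |v| ≤ ε → a ≤ h v) :
    a ≤ c⁻¹ * ∫ v, h v * K v := by
  rw [le_inv_mul_iff₀ hc]
  calc c * a ≤ (∫ v in {v | ε < |v|}ᶜ, K v) * a := mul_le_mul_of_nonneg_right hmass ha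
    _ = ∫ v in {v | ε < |v|}ᶜ, a * K v := by rw [integral_const_mul, mul_comm]
    _ ≤ ∫ v in {v | ε < |v|}ᶜ, h v * K v :=
      setIntegral_mono_on (hK.const_mul a).integrableOn hhK.integrableOn
        (measurableSet_lt_abs ε).compl fun v hv ↦
          mul_le_mul_of_nonneg_right (hle v (not_lt.1 hv)) (hK₀ v)
    _ ≤ ∫ v, h v * K v :=
      setIntegral_le_integral hhK <|
        Filter.Eventually.of_forall fun v ↦ mul_nonneg (hh₀ v) (hK₀ v)

lemma integral_mul_sub_setIntegral_le_of_forall_abs_le {b : ℝ} (hK₀ : ∀ v, 0 ≤ K v)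
    (hK : Integrable K) (hK₁ : ∫ v, K v = 1) (hhK : Integrable fun v ↦ h v * K v) (hb : 0 ≤ b)
    (hle : ∀ v, |v| ≤ ε → h v ≤ b) :
    (∫ v, h v * K v) - ∫ v in {v | ε < |v|}, h v * K v ≤ b := by
  rw [← integral_add_compl (measurableSet_lt_abs ε) hhK, add_sub_cancel_left]
  calc ∫ v in {v | ε < |v|}ᶜ, h v * K v ≤ ∫ v in {v | ε < |v|}ᶜ, b * K v :=
        setIntegral_mono_on hhK.integrableOn (hK.const_mul b).integrableOn
          (measurableSet_lt_abs ε).compl fun v hv ↦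
            mul_le_mul_of_nonneg_right (hle v (not_lt.1 hv)) (hK₀ v)
    _ = b * ∫ v in {v | ε < |v|}ᶜ, K v := integral_const_mul b _
    _ ≤ b * 1 := mul_le_mul_of_nonneg_left
        (hK₁ ▸ setIntegral_le_integral hK (Filter.Eventually.of_forall hK₀)) hb
    _ = b := mul_one b

end Domination

/-- If `f ≤_ε g` (ε-domination) for non-negative integrable `f, g`, then
`f(u) ≤ (1-2ε)⁻¹ (g * ρ_{ε²})(u)` and
`g(u) ≥ (f * ρ_{ε²})(u) - ∫_{|v|>ε} f(u-v) ρ_{ε²}(v) dv`. -/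
theorem statement9 (ε : ℝ) (hε : 0 < ε) (hε4 : ε < 1 / 4) (f g : ℝ → ℝ)
    (hf0 : ∀ t, 0 ≤ f t) (hg0 : ∀ t, 0 ≤ g t)
    (hfint : Integrable f) (hgint : Integrable g)
    (hdom : ∀ t v : ℝ, |v| ≤ ε → f t ≤ g (t + v)) :
    ∀ u : ℝ,
      f u ≤ (1 - 2 * ε)⁻¹ * (∫ v : ℝ, g (u - v) * smoothK (ε ^ 2) v) ∧
      (∫ v : ℝ, f (u - v) * smoothK (ε ^ 2) v) -
          (∫ v in {v : ℝ | ε < |v|}, f (u - v) * smoothK (ε ^ 2) v) ≤ g u := by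
  intro u
  have hδ : 0 < ε ^ 2 := by positivity
  have hK₀ := smoothK_nonneg hδ.le
  have hmass : 1 - 2 * ε ≤ ∫ v in {v | ε < |v|}ᶜ, smoothK (ε ^ 2) v := by
    convert one_sub_le_setIntegral_smoothK_abs_le hδ hε using 2
    field_simp
  constructor
  · refine le_inv_mul_integral_mul_of_forall_abs_le hK₀ (integrable_smoothK hδ.ne')
      (fun v ↦ hg0 _) (hgint.comp_sub_mul_smoothK hδ.le u) (hf0 u) (by linarith) hmass
      fun v hv ↦ ?_
    simpa [sub_eq_add_neg] using hdom u (-v) (by rwa [abs_neg])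
  · refine integral_mul_sub_setIntegral_le_of_forall_abs_le hK₀ (integrable_smoothK hδ.ne')
      (integral_smoothK hδ) (hfint.comp_sub_mul_smoothK hδ.le u) (hg0 u) fun v hv ↦ ?_
    simpa using hdom (u - v) v hv
end

section
/- Let (V_n)_{n≥1} be a sequence of non-decreasing functions on ℝ such that for every continuous compactly supported φ : ℝ → ℝ, the sequence ∫_ℝ V_n(t) φ(t) dt has a finite limit. Then there exists a unique right-continuous non-decreasing function V on ℝ such that for all such φ, lim_{n→∞} ∫_ℝ V_n(t) φ(t) dt = ∫_ℝ V(t) φ(t) dt. -/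
/-!
Testing against a nonnegative bump supported in `[a, b]` traps a convergent sequence between
`V n a` and `V n b`. Hence the sequences `V n x` are bounded, and `u x := limsup V n x` is monotone
with `limsup V n a ≤ liminf V n b` for `a < b`, so `V n x → u x` wherever `u` is continuous, that
is, off a countable set. The right-continuous version `W` of `u` agrees with `u` at those points, so
`V n → W` almost everywhere, with a bound that is uniform on compact intervals; dominated
convergence gives `∫ V n φ → ∫ W φ`. Distributional limits are unique up to null sets, and two
right-continuous functions that agree almost everywhere are equal.
-/

open MeasureTheory Filter Set Topology

lemma exists_bump_tsupport_subset_Icc {a b : ℝ} (hab : a < b) :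
    ∃ φ : ℝ → ℝ, Continuous φ ∧ 0 ≤ φ ∧ tsupport φ ⊆ Icc a b ∧ 0 < ∫ t, φ t := by
  let g : ContDiffBump ((a + b) / 2) :=
    ⟨(b - a) / 4, (b - a) / 2, by linarith, by linarith⟩
  refine ⟨g, g.continuous, fun _ => g.nonneg, ?_, g.integral_pos⟩
  rw [g.tsupport_eq, Real.closedBall_eq_Icc]
  exact Icc_subset_Icc (by simp only [g]; linarith) (by simp only [g]; linarith)

lemma Monotone.integral_mul_mem_Icc {f φ : ℝ → ℝ} {a b : ℝ} (hf : Monotone f)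
    (hφ : Continuous φ) (hφ_nonneg : 0 ≤ φ) (hφ_supp : tsupport φ ⊆ Icc a b) :
    ∫ t, f t * φ t ∈ Icc (f a * ∫ t, φ t) (f b * ∫ t, φ t) := by
  have hφ_cs : HasCompactSupport φ := isCompact_Icc.of_isClosed_subset (isClosed_tsupport φ) hφ_supp
  have hφ_int : Integrable φ := hφ.integrable_of_hasCompactSupport hφ_cs
  have hfφ_int : Integrable (fun t => f t * φ t) := by
    simpa only [smul_eq_mul, mul_comm] using
      hf.locallyIntegrable.integrable_smul_right_of_hasCompactSupport hφ hφ_cs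
  have hpoint : ∀ t, f a * φ t ≤ f t * φ t ∧ f t * φ t ≤ f b * φ t := fun t => by
    by_cases ht : t ∈ tsupport φ
    · exact ⟨mul_le_mul_of_nonneg_right (hf (hφ_supp ht).1) (hφ_nonneg t),
        mul_le_mul_of_nonneg_right (hf (hφ_supp ht).2) (hφ_nonneg t)⟩
    · simp [image_eq_zero_of_notMem_tsupport ht]
  rw [← integral_const_mul, ← integral_const_mul]
  exact ⟨integral_mono (hφ_int.const_mul _) hfφ_int fun t => (hpoint t).1,
    integral_mono hfφ_int (hφ_int.const_mul _) fun t => (hpoint t).2⟩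

lemma eq_of_ae_eq_of_continuousWithinAt_Ici {X : Type*} [TopologicalSpace X] [T2Space X]
    {f g : ℝ → X} (h : f =ᵐ[volume] g) (hf : ∀ t, ContinuousWithinAt f (Ici t) t)
    (hg : ∀ t, ContinuousWithinAt g (Ici t) t) : f = g := by
  funext x
  have hx : x ∈ closure (Ioi x ∩ {y | f y = g y}) :=
    closure_minimal ((volume.dense_of_ae h).open_subset_closure_inter isOpen_Ioi)
      isClosed_closure (by rw [closure_Ioi]; exact self_mem_Ici)
  have hfreq : ∃ᶠ y in 𝓝[>] x, f y = g y := by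
    rw [frequently_nhdsWithin_iff]
    exact (mem_closure_iff_frequently.1 hx).mono fun y hy => ⟨hy.2, hy.1⟩
  exact tendsto_nhds_unique_of_frequently_eq ((hf x).mono Ioi_subset_Ici_self)
    ((hg x).mono Ioi_subset_Ici_self) hfreq

lemma ae_eq_of_forall_integral_mul_eq {f g : ℝ → ℝ} (hf : LocallyIntegrable f)
    (hg : LocallyIntegrable g) (h : ∀ φ : ℝ → ℝ, Continuous φ → HasCompactSupport φ →
      ∫ t, f t * φ t = ∫ t, g t * φ t) : f =ᵐ[volume] g :=
  ae_eq_of_integral_contDiff_smul_eq hf hg fun φ hφ hφ_cs => by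
    simpa only [smul_eq_mul, mul_comm] using h φ hφ.continuous hφ_cs

noncomputable def upperLimit (V : ℕ → ℝ → ℝ) (x : ℝ) : ℝ := limsup (fun n => V n x) atTop

section DistributionalLimit

variable {V : ℕ → ℝ → ℝ} (hmono : ∀ n, Monotone (V n))
  (hconv : ∀ φ : ℝ → ℝ, Continuous φ → HasCompactSupport φ →
    ∃ L : ℝ, Tendsto (fun n => ∫ t : ℝ, V n t * φ t) atTop (𝓝 L))
include hmono hconv

lemma exists_tendsto_between {a b : ℝ} (hab : a < b) :
    ∃ (I : ℕ → ℝ) (L : ℝ), Tendsto I atTop (𝓝 L) ∧ ∀ n, V n a ≤ I n ∧ I n ≤ V n b := by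
  obtain ⟨φ, hφ, hφ_nonneg, hφ_supp, hφ_pos⟩ := exists_bump_tsupport_subset_Icc hab
  obtain ⟨L, hL⟩ := hconv φ hφ (isCompact_Icc.of_isClosed_subset (isClosed_tsupport φ) hφ_supp)
  refine ⟨fun n => (∫ t, V n t * φ t) / ∫ t, φ t, L / ∫ t, φ t, hL.div_const _, fun n => ?_⟩
  have hn := (hmono n).integral_mul_mem_Icc hφ hφ_nonneg hφ_supp
  exact ⟨(le_div_iff₀ hφ_pos).2 hn.1, (div_le_iff₀ hφ_pos).2 hn.2⟩

lemma bddAbove_range_apply (x : ℝ) : BddAbove (range fun n => V n x) := by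
  obtain ⟨I, L, hI, hVI⟩ := exists_tendsto_between hmono hconv (lt_add_one x)
  obtain ⟨M, hM⟩ := hI.bddAbove_range
  exact ⟨M, forall_mem_range.2 fun n => (hVI n).1.trans (hM (mem_range_self n))⟩

lemma bddBelow_range_apply (x : ℝ) : BddBelow (range fun n => V n x) := by
  obtain ⟨I, L, hI, hVI⟩ := exists_tendsto_between hmono hconv (sub_one_lt x)
  obtain ⟨M, hM⟩ := hI.bddBelow_range
  exact ⟨M, forall_mem_range.2 fun n => (hM (mem_range_self n)).trans (hVI n).2⟩

lemma exists_abs_le_of_mem_Icc (a b : ℝ) : ∃ D, ∀ n, ∀ t ∈ Icc a b, |V n t| ≤ D := by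
  obtain ⟨C, hC⟩ := bddAbove_range_apply hmono hconv b
  obtain ⟨c, hc⟩ := bddBelow_range_apply hmono hconv a
  refine ⟨max C (-c), fun n t ht => abs_le.2 ⟨?_, ?_⟩⟩
  · linarith [le_max_right C (-c), hc (mem_range_self n), hmono n ht.1]
  · linarith [le_max_left C (-c), hC (mem_range_self n), hmono n ht.2]

lemma limsup_le_liminf_of_lt {a b : ℝ} (hab : a < b) :
    limsup (fun n => V n a) atTop ≤ liminf (fun n => V n b) atTop := by
  obtain ⟨I, L, hI, hVI⟩ := exists_tendsto_between hmono hconv hab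
  calc limsup (fun n => V n a) atTop
      ≤ limsup I atTop :=
        limsup_le_limsup (Eventually.of_forall fun n => (hVI n).1)
          (bddBelow_range_apply hmono hconv a).isBoundedUnder_of_range.isCoboundedUnder_le
          hI.isBoundedUnder_le
    _ = liminf I atTop := hI.limsup_eq.trans hI.liminf_eq.symm
    _ ≤ liminf (fun n => V n b) atTop :=
        liminf_le_liminf (Eventually.of_forall fun n => (hVI n).2) hI.isBoundedUnder_ge
          (bddAbove_range_apply hmono hconv b).isBoundedUnder_of_range.isCoboundedUnder_ge

lemma monotone_upperLimit : Monotone (upperLimit V) := by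
  intro a b hab
  rcases hab.eq_or_lt with rfl | hab
  · exact le_rfl
  · exact (limsup_le_liminf_of_lt hmono hconv hab).trans (liminf_le_limsup
      (bddAbove_range_apply hmono hconv b).isBoundedUnder_of_range
      (bddBelow_range_apply hmono hconv b).isBoundedUnder_of_range)

lemma tendsto_upperLimit_of_continuousAt {x : ℝ} (hx : ContinuousAt (upperLimit V) x) :
    Tendsto (fun n => V n x) atTop (𝓝 (upperLimit V x)) := by
  refine tendsto_of_le_liminf_of_limsup_le ?_ le_rfl
    (bddAbove_range_apply hmono hconv x).isBoundedUnder_of_range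
    (bddBelow_range_apply hmono hconv x).isBoundedUnder_of_range
  have hleft : Tendsto (upperLimit V) (𝓝[<] x) (𝓝 (upperLimit V x)) :=
    hx.tendsto.mono_left nhdsWithin_le_nhds
  exact le_of_tendsto hleft (eventually_nhdsWithin_of_forall fun y hy =>
    limsup_le_liminf_of_lt hmono hconv hy)

lemma ae_tendsto_stieltjesFunction :
    ∀ᵐ x, Tendsto (fun n => V n x) atTop
      (𝓝 ((monotone_upperLimit hmono hconv).stieltjesFunction x)) := by
  have hcont : ∀ᵐ x : ℝ, ContinuousAt (upperLimit V) x :=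
    (monotone_upperLimit hmono hconv).countable_not_continuousAt.measure_zero _
  filter_upwards [hcont] with x hx
  rw [(monotone_upperLimit hmono hconv).stieltjesFunction_eq,
    rightLim_eq_of_tendsto (hx.tendsto.mono_left nhdsWithin_le_nhds)]
  exact tendsto_upperLimit_of_continuousAt hmono hconv hx

lemma tendsto_integral_mul_stieltjesFunction {φ : ℝ → ℝ} (hφ : Continuous φ)
    (hφ_cs : HasCompactSupport φ) :
    Tendsto (fun n => ∫ t, V n t * φ t) atTop
      (𝓝 (∫ t, (monotone_upperLimit hmono hconv).stieltjesFunction t * φ t)) := by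
  have hsupp := hφ_cs.isCompact.isBounded.subset_Icc_sInf_sSup
  obtain ⟨D, hD⟩ := exists_abs_le_of_mem_Icc hmono hconv (sInf (tsupport φ)) (sSup (tsupport φ))
  refine tendsto_integral_of_dominated_convergence (fun t => D * |φ t|)
    (fun n => ((hmono n).measurable.mul hφ.measurable).aestronglyMeasurable)
    ((hφ.integrable_of_hasCompactSupport hφ_cs).abs.const_mul D)
    (fun n => Eventually.of_forall fun t => ?_)
    (ae_tendsto_stieltjesFunction hmono hconv |>.mono fun t ht => ht.mul_const (φ t))
  rw [Real.norm_eq_abs, abs_mul]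
  by_cases ht : t ∈ tsupport φ
  · exact mul_le_mul_of_nonneg_right (hD n t (hsupp ht)) (abs_nonneg _)
  · simp [image_eq_zero_of_notMem_tsupport ht]

end DistributionalLimit

/-- If `(V_n)` is a sequence of non-decreasing functions on `ℝ` whose integrals against every
continuous compactly supported test function converge, then there is a unique right-continuous
non-decreasing function `V` with `∫ V_n φ → ∫ V φ` for all such test functions. -/
theorem statement13 (V : ℕ → ℝ → ℝ) (hmono : ∀ n, Monotone (V n))
    (hconv : ∀ φ : ℝ → ℝ, Continuous φ → HasCompactSupport φ →
      ∃ L : ℝ, Tendsto (fun n => ∫ t : ℝ, V n t * φ t) atTop (nhds L)) :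
    ∃! W : ℝ → ℝ,
      (Monotone W ∧ ∀ t : ℝ, ContinuousWithinAt W (Set.Ici t) t) ∧
        ∀ φ : ℝ → ℝ, Continuous φ → HasCompactSupport φ →
          Tendsto (fun n => ∫ t : ℝ, V n t * φ t) atTop (nhds (∫ t : ℝ, W t * φ t)) := by
  set W := (monotone_upperLimit hmono hconv).stieltjesFunction
  have hW := fun φ (hφ : Continuous φ) (hφ_cs : HasCompactSupport φ) =>
    tendsto_integral_mul_stieltjesFunction hmono hconv hφ hφ_cs
  refine ⟨W, ⟨⟨W.mono, W.right_continuous⟩, hW⟩, ?_⟩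
  rintro W' ⟨⟨hW'_mono, hW'_rc⟩, hW'⟩
  refine eq_of_ae_eq_of_continuousWithinAt_Ici ?_ hW'_rc W.right_continuous
  exact ae_eq_of_forall_integral_mul_eq hW'_mono.locallyIntegrable W.mono.locallyIntegrable
    fun φ hφ hφ_cs => tendsto_nhds_unique (hW' φ hφ hφ_cs) (hW φ hφ hφ_cs)
end
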